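/- Jump relation for the single-layer heat potential: let X be Hölder continuous with exponent γ > 1/2 on [0,T] and φ ∈ C⁰_{(ν)}((0,T]) (i.e., sup_{0<t≤T} t^{1−ν}|φ(t)| < ∞ for some ν ∈ (0,1]). Define w(x,t) = ∫₀ᵗ G(x,t;X_τ,τ)φ(τ)dτ. Then lim_{x→X_t^±} ∂_x w(x,t) = ∓φ(t) + ∫₀ᵗ ∂_x G(X_t,t;X_τ,τ)φ(τ)dτ. -/

import Mathlib

open MeasureTheory Filter Set

/-- The heat kernel G(x,t;ξ,s) = (2π(t−s))^{−1/2} exp(−(x−ξ)²/(2(t−s))) for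
the equation v_t = ½ v_{xx}. -/
noncomputable def heatG (x t ξ s : ℝ) : ℝ :=
  (Real.sqrt (2 * Real.pi * (t - s)))⁻¹ * Real.exp (-(x - ξ) ^ 2 / (2 * (t - s)))

/-- The spatial derivative ∂_x G(x,t;ξ,s) = −(x−ξ)/(t−s) · G(x,t;ξ,s). -/
noncomputable def heatGx (x t ξ s : ℝ) : ℝ :=
  -((x - ξ) / (t - s)) * heatG x t ξ s

/-!
For `x ≠ X t` one may differentiate under the integral: `∂ₓw(x,t) = ∫ ∂ₓG(x,t;X_τ,τ) φ(τ) dτ`.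
Freeze the source point at `X t`. The difference `∂ₓG(x,t;X_τ,τ) - ∂ₓG(x,t;X_t,τ)` is
`O(|X_τ - X_t| (t-τ)^{-3/2}) = O((t-τ)^{γ-3/2})` uniformly in `x`, which is integrable because
`γ > 1/2`; so its integral is continuous in `x` and tends to the principal value at `x = X t`.
With the source frozen, the substitution `b = |x - X_t| / √(t-τ)` shows that
`∫ₛᵗ |∂ₓG(x,t;X_t,τ)| dτ` is a Gaussian tail probability: at most `1`, and tending to `1` as
`x → X t`, while `∂ₓG(x,t;X_t,τ)` has the sign of `X t - x`. Hence `∂ₓG(·,t;X_t,·)` is `±` an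
approximate identity concentrating at `τ = t`, which produces the jump `∓φ(t)`.
-/

open Topology Real

theorem rpow_neg_one_half_eq_inv_sqrt {a : ℝ} (ha : 0 ≤ a) : a ^ (-(1 / 2) : ℝ) = (√a)⁻¹ := by
  rw [rpow_neg ha, sqrt_eq_rpow]

theorem rpow_neg_three_halves_eq_inv_mul_sqrt {a : ℝ} (ha : 0 < a) :
    a ^ (-(3 / 2) : ℝ) = (a * √a)⁻¹ := by
  rw [rpow_neg ha.le, sqrt_eq_rpow, ← rpow_one_add' ha.le (by norm_num)]
  norm_num

theorem abs_deriv_mul_exp_neg_sq_le {a : ℝ} (ha : 0 < a) (w : ℝ) :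
    |(1 - w ^ 2 / a) * exp (-w ^ 2 / (2 * a))| ≤ 2 := by
  set σ := w ^ 2 / (2 * a)
  have hσ : 0 ≤ σ := by positivity
  have hσ_exp : 1 + σ ≤ exp σ := by linarith [add_one_le_exp σ]
  have hprod : exp (-w ^ 2 / (2 * a)) * exp σ = 1 := by rw [← exp_add]; simp [σ, neg_div]
  rw [abs_mul, abs_of_pos (exp_pos _), show w ^ 2 / a = 2 * σ by simp only [σ]; field_simp]
  have habs : |1 - 2 * σ| ≤ 2 * (1 + σ) := by rw [abs_le]; constructor <;> linarith
  nlinarith [exp_pos (-w ^ 2 / (2 * a)), abs_nonneg (1 - 2 * σ)]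

theorem abs_mul_exp_neg_sq_sub_le {a : ℝ} (ha : 0 < a) (u v : ℝ) :
    |u * exp (-u ^ 2 / (2 * a)) - v * exp (-v ^ 2 / (2 * a))| ≤ 2 * |u - v| := by
  have hderiv (w : ℝ) : HasDerivAt (fun w => w * exp (-w ^ 2 / (2 * a)))
      ((1 - w ^ 2 / a) * exp (-w ^ 2 / (2 * a))) w := by
    have h := ((hasDerivAt_pow 2 w).neg.div_const (2 * a)).exp
    refine ((hasDerivAt_id' w).mul h).congr_deriv ?_
    simp only [Pi.neg_apply]
    field_simp
    ring
  simpa only [Real.norm_eq_abs] using Convex.norm_image_sub_le_of_norm_hasDerivWithin_le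
    (fun w _ => (hderiv w).hasDerivWithinAt) (fun w _ => abs_deriv_mul_exp_neg_sq_le ha w)
    convex_univ (mem_univ v) (mem_univ u)

theorem integrableOn_rpow_mul_rpow_sub {a b t : ℝ} (ha : -1 < a) (hb : -1 < b) (ht : 0 < t) :
    IntegrableOn (fun τ => τ ^ a * (t - τ) ^ b) (Ioo 0 t) := by
  have hleft : IntegrableOn (fun τ : ℝ => τ ^ a) (Ioc 0 (t / 2)) :=
    (intervalIntegrable_iff_integrableOn_Ioc_of_le (by linarith)).1
      (intervalIntegral.intervalIntegrable_rpow' ha)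
  have hright : IntegrableOn (fun τ : ℝ => (t - τ) ^ b) (Ico (t / 2) t) := by
    have h := ((intervalIntegral.intervalIntegrable_rpow' hb (a := 0) (b := t / 2)).comp_sub_left
      t).symm
    rw [sub_zero, show t - t / 2 = t / 2 by ring,
      intervalIntegrable_iff_integrableOn_Icc_of_le (by linarith)] at h
    exact h.mono_set Ico_subset_Icc_self
  rw [← Ioc_union_Ico_eq_Ioo (show 0 < t / 2 by linarith) (show t / 2 < t by linarith)]
  refine IntegrableOn.union ?_ ?_
  · refine hleft.mul_continuousOn_of_subset ?_ measurableSet_Ioc isCompact_Icc Ioc_subset_Icc_self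
    exact fun τ hτ => ((continuousAt_const.sub (continuousAt_id' τ)).rpow_const
      (Or.inl (sub_ne_zero.2 (by linarith [hτ.2])))).continuousWithinAt
  · refine hright.continuousOn_mul_of_subset ?_ isCompact_Icc measurableSet_Ico Ico_subset_Icc_self
    exact fun τ hτ => ((continuousAt_id' τ).rpow_const
      (Or.inl (show τ ≠ 0 by linarith [hτ.1]))).continuousWithinAt

theorem integrableOn_rpow_sub_mul {φ : ℝ → ℝ} {a b t C : ℝ} (ha : -1 < a) (hb : -1 < b)
    (ht : 0 < t) (hφ : ContinuousOn φ (Ioo 0 t)) (hC : ∀ τ ∈ Ioo 0 t, |φ τ| ≤ C * τ ^ a) :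
    IntegrableOn (fun τ => (t - τ) ^ b * φ τ) (Ioo 0 t) := by
  have hcont : ContinuousOn (fun τ => (t - τ) ^ b) (Ioo 0 t) := fun τ hτ =>
    ((continuousAt_const.sub (continuousAt_id' τ)).rpow_const
      (Or.inl (sub_ne_zero.2 hτ.2.ne'))).continuousWithinAt
  refine Integrable.mono' ((integrableOn_rpow_mul_rpow_sub ha hb ht).const_mul C)
    ((hcont.mul hφ).aestronglyMeasurable measurableSet_Ioo) ?_
  filter_upwards [ae_restrict_mem measurableSet_Ioo] with τ hτ
  have hb0 : 0 ≤ (t - τ) ^ b := rpow_nonneg (sub_pos.2 hτ.2).le b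
  rw [norm_mul, Real.norm_of_nonneg hb0, Real.norm_eq_abs]
  nlinarith [hC τ hτ]

theorem continuousOn_of_abs_sub_le_mul_rpow {f : ℝ → ℝ} {s : Set ℝ} {m γ : ℝ} (hγ : 0 < γ)
    (hf : ∀ x ∈ s, ∀ y ∈ s, |f y - f x| ≤ m * |y - x| ^ γ) : ContinuousOn f s := by
  intro x hx
  have hlim : Tendsto (fun y => m * |y - x| ^ γ) (𝓝 x) (𝓝 0) := by
    have : Continuous fun y => m * |y - x| ^ γ := continuous_const.mul
      ((continuous_id.sub continuous_const).abs.rpow_const fun _ => Or.inr hγ.le)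
    simpa [zero_rpow hγ.ne'] using this.tendsto x
  rw [ContinuousWithinAt, tendsto_iff_norm_sub_tendsto_zero]
  exact squeeze_zero' (Eventually.of_forall fun _ => norm_nonneg _)
    (eventually_nhdsWithin_of_forall fun y hy => hf x hx y hy) (hlim.mono_left nhdsWithin_le_nhds)

-- For `y ≥ 0` this is `ℙ(|Z| > y)` with `Z` a standard normal variable.
noncomputable def gaussTail (y : ℝ) : ℝ := 2 / √(2 * π) * ∫ b in Ioi y, exp (-b ^ 2 / 2)

theorem integrable_exp_neg_sq_div_two : Integrable fun b : ℝ => exp (-b ^ 2 / 2) := by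
  convert integrable_exp_neg_mul_sq (b := 1 / 2) (by norm_num) using 2 with b
  ring_nf

theorem gaussTail_zero : gaussTail 0 = 1 := by
  have h := integral_gaussian_Ioi (1 / 2)
  rw [gaussTail]
  simp_rw [show ∀ b : ℝ, -b ^ 2 / 2 = -(1 / 2) * b ^ 2 from fun b => by ring]
  rw [h, show π / (1 / 2) = 2 * π by ring]
  field_simp

theorem gaussTail_le_one {y : ℝ} (hy : 0 ≤ y) : gaussTail y ≤ 1 := by
  rw [← gaussTail_zero]
  refine mul_le_mul_of_nonneg_left ?_ (by positivity)
  exact setIntegral_mono_set integrable_exp_neg_sq_div_two.integrableOn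
    (Eventually.of_forall fun b => (exp_pos _).le) (Ioi_subset_Ioi hy).eventuallyLE

theorem continuous_gaussTail : Continuous gaussTail := by
  have h (y : ℝ) : gaussTail y =
      2 / √(2 * π) * ((∫ b in Ioi 0, exp (-b ^ 2 / 2)) - ∫ b in (0 : ℝ)..y, exp (-b ^ 2 / 2)) := by
    rw [gaussTail, ← intervalIntegral.integral_Ioi_sub_Ioi'
      integrable_exp_neg_sq_div_two.integrableOn integrable_exp_neg_sq_div_two.integrableOn]
    ring
  rw [funext h]
  exact continuous_const.mul (continuous_const.sub (intervalIntegral.continuous_primitive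
    (fun _ _ => integrable_exp_neg_sq_div_two.intervalIntegrable) 0))

theorem tendsto_gaussTail_abs_sub_div (ξ c : ℝ) :
    Tendsto (fun x => gaussTail (|x - ξ| / c)) (𝓝 ξ) (𝓝 1) :=
  (continuous_gaussTail.comp (by fun_prop : Continuous fun x => |x - ξ| / c)).tendsto' ξ 1
    (by simp [gaussTail_zero])

theorem heatG_nonneg (x t ξ s : ℝ) : 0 ≤ heatG x t ξ s := by unfold heatG; positivity

theorem heatGx_self (x t s : ℝ) : heatGx x t x s = 0 := by simp [heatGx]

theorem heatGx_eq_mul (x t ξ s : ℝ) : heatGx x t ξ s =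
    -((t - s) * √(2 * π * (t - s)))⁻¹ * ((x - ξ) * exp (-(x - ξ) ^ 2 / (2 * (t - s)))) := by
  rw [heatGx, heatG, mul_inv]; ring

theorem hasDerivAt_heatG (x t ξ s : ℝ) :
    HasDerivAt (fun y => heatG y t ξ s) (heatGx x t ξ s) x := by
  have hexp : HasDerivAt (fun y => -(y - ξ) ^ 2 / (2 * (t - s))) (-((x - ξ) / (t - s))) x := by
    refine ((((hasDerivAt_id' x).sub_const ξ).pow 2).neg.div_const _).congr_deriv ?_
    rcases eq_or_ne (t - s) 0 with h | h
    · simp [h]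
    · field_simp; norm_num; ring
  exact (hexp.exp.const_mul _).congr_deriv (by unfold heatGx heatG; ring)

theorem continuous_heatGx (t ξ s : ℝ) : Continuous fun x => heatGx x t ξ s := by
  unfold heatGx heatG; fun_prop

theorem measurable_heatGx (x t ξ : ℝ) : Measurable fun s => heatGx x t ξ s := by
  unfold heatGx heatG; fun_prop

theorem continuousOn_heatG_comp {X : ℝ → ℝ} {s : Set ℝ} {x t : ℝ} (hX : ContinuousOn X s)
    (hs : ∀ τ ∈ s, τ < t) : ContinuousOn (fun τ => heatG x t (X τ) τ) s := by
  have h₁ : ∀ τ ∈ s, 2 * (t - τ) ≠ 0 := fun τ hτ =>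
    mul_ne_zero two_ne_zero (sub_pos.2 (hs τ hτ)).ne'
  have h₂ : ∀ τ ∈ s, √(2 * π * (t - τ)) ≠ 0 := fun τ hτ =>
    (sqrt_pos.2 (mul_pos (by positivity) (sub_pos.2 (hs τ hτ)))).ne'
  unfold heatG
  fun_prop (disch := assumption)

theorem continuousOn_heatGx_comp {X : ℝ → ℝ} {s : Set ℝ} {x t : ℝ} (hX : ContinuousOn X s)
    (hs : ∀ τ ∈ s, τ < t) : ContinuousOn (fun τ => heatGx x t (X τ) τ) s :=
  ((continuousOn_const.sub hX).div (continuousOn_const.sub continuousOn_id)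
    fun τ hτ => (sub_pos.2 (hs τ hτ)).ne').neg.mul (continuousOn_heatG_comp hX hs)

theorem abs_heatG_le {x t ξ s : ℝ} (h : s < t) :
    |heatG x t ξ s| ≤ (√(2 * π))⁻¹ * (t - s) ^ (-(1 / 2) : ℝ) := by
  have hts : 0 < t - s := sub_pos.2 h
  rw [heatG, rpow_neg_one_half_eq_inv_sqrt hts.le, ← mul_inv, ← sqrt_mul (by positivity),
    abs_of_nonneg (by positivity)]
  refine mul_le_of_le_one_right (by positivity) (exp_le_one_iff.2 ?_)
  exact div_nonpos_of_nonpos_of_nonneg (neg_nonpos.2 (sq_nonneg _)) (by positivity)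

theorem abs_heatGx_sub_le {x t ξ₁ ξ₂ s : ℝ} (h : s < t) :
    |heatGx x t ξ₁ s - heatGx x t ξ₂ s| ≤ 2 / √(2 * π) * |ξ₁ - ξ₂| * (t - s) ^ (-(3 / 2) : ℝ) := by
  have hts : 0 < t - s := sub_pos.2 h
  have hlip := abs_mul_exp_neg_sq_sub_le hts (x - ξ₁) (x - ξ₂)
  rw [sub_sub_sub_cancel_left, abs_sub_comm ξ₂] at hlip
  rw [heatGx_eq_mul, heatGx_eq_mul, ← mul_sub, abs_mul, abs_neg, abs_of_pos (by positivity),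
    rpow_neg_three_halves_eq_inv_mul_sqrt hts, sqrt_mul (by positivity)]
  calc ((t - s) * (√(2 * π) * √(t - s)))⁻¹ * _
      ≤ ((t - s) * (√(2 * π) * √(t - s)))⁻¹ * (2 * |ξ₁ - ξ₂|) :=
        mul_le_mul_of_nonneg_left hlip (by positivity)
    _ = _ := by field_simp

theorem abs_heatGx_le {x t ξ s : ℝ} (h : s < t) :
    |heatGx x t ξ s| ≤ 2 / √(2 * π) * |x - ξ| * (t - s) ^ (-(3 / 2) : ℝ) := by
  simpa [heatGx_self, abs_sub_comm] using abs_heatGx_sub_le (x := x) (ξ₁ := ξ) (ξ₂ := x) h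

theorem abs_heatGx_le_of_ne {x t ξ s : ℝ} (h : s < t) (hx : x ≠ ξ) :
    |heatGx x t ξ s| ≤ 8 / √(2 * π) * √(t - s) / |x - ξ| ^ 3 := by
  have hts : 0 < t - s := sub_pos.2 h
  have hρ : 0 < |x - ξ| := abs_pos.2 (sub_ne_zero.2 hx)
  set y := (x - ξ) ^ 2 / (2 * (t - s))
  have hy : 0 < y := by positivity
  -- `y ^ 2 / 2 ≤ exp y` turns the Gaussian factor into a power of `t - s`
  have hexp : exp (-(x - ξ) ^ 2 / (2 * (t - s))) ≤ 2 / y ^ 2 := by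
    rw [neg_div, exp_neg, inv_le_comm₀ (exp_pos _) (by positivity), inv_div]
    nlinarith [quadratic_le_exp_of_nonneg hy.le]
  rw [heatGx_eq_mul, abs_mul, abs_neg, abs_mul, abs_of_pos (exp_pos _), abs_of_pos (by positivity),
    sqrt_mul (by positivity)]
  calc ((t - s) * (√(2 * π) * √(t - s)))⁻¹ * (|x - ξ| * exp (-(x - ξ) ^ 2 / (2 * (t - s))))
      ≤ ((t - s) * (√(2 * π) * √(t - s)))⁻¹ * (|x - ξ| * (2 / y ^ 2)) := by gcongr
    _ = 8 / √(2 * π) * √(t - s) / |x - ξ| ^ 3 := by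
      have hsq : √(t - s) ^ 2 = t - s := sq_sqrt hts.le
      simp only [y, ← sq_abs (x - ξ)]
      field_simp
      linear_combination -8 * hsq

theorem abs_heatGx_eq {x t ξ s : ℝ} (h : s < t) :
    |heatGx x t ξ s| = |x - ξ| / (t - s) * heatG x t ξ s := by
  rw [heatGx, abs_mul, abs_neg, abs_div, abs_of_pos (sub_pos.2 h), abs_of_nonneg (heatG_nonneg ..)]

theorem heatGx_nonneg_of_lt {x t ξ s : ℝ} (hx : x < ξ) (h : s < t) : 0 ≤ heatGx x t ξ s :=
  mul_nonneg (neg_nonneg.2 (div_nonpos_of_nonpos_of_nonneg (by linarith) (by linarith)))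
    (heatG_nonneg ..)

theorem heatGx_nonpos_of_gt {x t ξ s : ℝ} (hx : ξ < x) (h : s < t) : heatGx x t ξ s ≤ 0 :=
  mul_nonpos_of_nonpos_of_nonneg (neg_nonpos.2 (div_nonneg (by linarith) (by linarith)))
    (heatG_nonneg ..)

theorem image_div_sqrt_sub_Ioo {ρ s t : ℝ} (hρ : 0 < ρ) (h : s < t) :
    (fun τ => ρ / √(t - τ)) '' Ioo s t = Ioi (ρ / √(t - s)) := by
  ext b
  constructor
  · rintro ⟨τ, ⟨hsτ, hτt⟩, rfl⟩
    exact div_lt_div_of_pos_left hρ (sqrt_pos.2 (sub_pos.2 hτt))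
      (sqrt_lt_sqrt (sub_pos.2 hτt).le (by linarith))
  · intro hb
    have hb0 : 0 < b := (div_pos hρ (sqrt_pos.2 (sub_pos.2 h))).trans hb
    have hρb : ρ / b < √(t - s) := by
      rwa [mem_Ioi, div_lt_iff₀ (sqrt_pos.2 (sub_pos.2 h)), ← div_lt_iff₀' hb0] at hb
    have hsq : (ρ / b) ^ 2 < t - s := by
      simpa [sq_sqrt (sub_pos.2 h).le] using pow_lt_pow_left₀ hρb (by positivity) two_ne_zero
    refine ⟨t - (ρ / b) ^ 2, ⟨by linarith, by linarith [show 0 < (ρ / b) ^ 2 by positivity]⟩, ?_⟩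
    change ρ / √(t - (t - (ρ / b) ^ 2)) = b
    rw [sub_sub_cancel, sqrt_sq (by positivity), div_div_cancel₀ hρ.ne']

theorem integral_abs_heatGx_Ioo {x t ξ s : ℝ} (hx : x ≠ ξ) (h : s < t) :
    ∫ τ in Ioo s t, |heatGx x t ξ τ| = gaussTail (|x - ξ| / √(t - s)) := by
  set ρ := |x - ξ|
  have hρ : 0 < ρ := abs_pos.2 (sub_ne_zero.2 hx)
  set f : ℝ → ℝ := fun τ => ρ / √(t - τ)
  have hf' : ∀ τ ∈ Ioo s t,
      HasDerivWithinAt f (ρ / (2 * (t - τ) * √(t - τ))) (Ioo s t) τ := by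
    intro τ hτ
    have hτt : 0 < t - τ := sub_pos.2 hτ.2
    have h := ((hasDerivAt_id' τ).const_sub t).sqrt hτt.ne'
    refine ((hasDerivAt_const τ ρ).div h (sqrt_pos.2 hτt).ne').hasDerivWithinAt.congr_deriv ?_
    field_simp
    rw [sq_sqrt hτt.le]
    ring
  have hmono : MonotoneOn f (Ioo s t) := fun τ₁ hτ₁ τ₂ hτ₂ hle =>
    div_le_div_of_nonneg_left hρ.le (sqrt_pos.2 (sub_pos.2 hτ₂.2)) (sqrt_le_sqrt (by linarith))
  rw [gaussTail, ← image_div_sqrt_sub_Ioo hρ h, ← integral_const_mul,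
    integral_image_eq_integral_deriv_smul_of_monotoneOn measurableSet_Ioo hf' hmono]
  refine setIntegral_congr_fun measurableSet_Ioo fun τ hτ => ?_
  have hτt : 0 < t - τ := sub_pos.2 hτ.2
  simp only [f, ρ]
  rw [abs_heatGx_eq hτ.2, heatG, smul_eq_mul, div_pow, sq_sqrt hτt.le, sq_abs,
    sqrt_mul (by positivity)]
  field_simp

theorem integral_heatGx_Ioo_of_lt {x t ξ s : ℝ} (hx : x < ξ) (h : s < t) :
    ∫ τ in Ioo s t, heatGx x t ξ τ = gaussTail (|x - ξ| / √(t - s)) := by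
  rw [← integral_abs_heatGx_Ioo hx.ne h]
  exact setIntegral_congr_fun measurableSet_Ioo fun τ hτ =>
    (abs_of_nonneg (heatGx_nonneg_of_lt hx hτ.2)).symm

theorem integral_heatGx_Ioo_of_gt {x t ξ s : ℝ} (hx : ξ < x) (h : s < t) :
    ∫ τ in Ioo s t, heatGx x t ξ τ = -gaussTail (|x - ξ| / √(t - s)) := by
  rw [← integral_abs_heatGx_Ioo hx.ne' h, ← integral_neg]
  exact setIntegral_congr_fun measurableSet_Ioo fun τ hτ => by
    rw [abs_of_nonpos (heatGx_nonpos_of_gt hx hτ.2), neg_neg]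

theorem tendsto_integral_heatGx_nhdsLT {t ξ s : ℝ} (h : s < t) :
    Tendsto (fun x => ∫ τ in Ioo s t, heatGx x t ξ τ) (𝓝[<] ξ) (𝓝 1) :=
  ((tendsto_gaussTail_abs_sub_div ξ _).mono_left nhdsWithin_le_nhds).congr'
    (eventually_nhdsWithin_of_forall fun _ hx => (integral_heatGx_Ioo_of_lt hx h).symm)

theorem tendsto_integral_heatGx_nhdsGT {t ξ s : ℝ} (h : s < t) :
    Tendsto (fun x => ∫ τ in Ioo s t, heatGx x t ξ τ) (𝓝[>] ξ) (𝓝 (-1)) :=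
  ((tendsto_gaussTail_abs_sub_div ξ _).neg.mono_left nhdsWithin_le_nhds).congr'
    (eventually_nhdsWithin_of_forall fun _ hx => (integral_heatGx_Ioo_of_gt hx h).symm)

theorem integrableOn_heatGx_mul {ψ : ℝ → ℝ} {x t ξ s : ℝ} (hx : x ≠ ξ)
    (hψ : IntegrableOn ψ (Ioo s t)) : IntegrableOn (fun τ => heatGx x t ξ τ * ψ τ) (Ioo s t) := by
  refine hψ.bdd_mul (c := 8 / √(2 * π) * √(t - s) / |x - ξ| ^ 3)
    (measurable_heatGx x t ξ).aestronglyMeasurable ?_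
  filter_upwards [ae_restrict_mem measurableSet_Ioo] with τ hτ
  refine (abs_heatGx_le_of_ne hτ.2 hx).trans ?_
  gcongr
  linarith [hτ.1]

theorem abs_integral_heatGx_mul_le {ψ : ℝ → ℝ} {x t ξ s c : ℝ} (hx : x ≠ ξ) (h : s < t)
    (hψ : ∀ τ ∈ Ioo s t, |ψ τ| ≤ c) : |∫ τ in Ioo s t, heatGx x t ξ τ * ψ τ| ≤ c := by
  have hc : 0 ≤ c := (abs_nonneg _).trans (hψ ((s + t) / 2) ⟨by linarith, by linarith⟩)
  have hint : IntegrableOn (fun τ => heatGx x t ξ τ) (Ioo s t) := by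
    simpa using integrableOn_heatGx_mul (ψ := fun _ => 1) hx (integrableOn_const (by simp))
  calc |∫ τ in Ioo s t, heatGx x t ξ τ * ψ τ|
      ≤ ∫ τ in Ioo s t, c * |heatGx x t ξ τ| := by
        rw [← Real.norm_eq_abs]
        refine norm_integral_le_of_norm_le (hint.norm.const_mul c) ?_
        filter_upwards [ae_restrict_mem measurableSet_Ioo] with τ hτ
        rw [norm_mul, mul_comm, Real.norm_eq_abs, Real.norm_eq_abs]
        exact mul_le_mul_of_nonneg_right (hψ τ hτ) (abs_nonneg _)
    _ = c * gaussTail (|x - ξ| / √(t - s)) := by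
        rw [integral_const_mul, integral_abs_heatGx_Ioo hx h]
    _ ≤ c := mul_le_of_le_one_right hc (gaussTail_le_one (by positivity))

theorem tendsto_setIntegral_heatGx_mul_of_subset_Iic {ψ : ℝ → ℝ} {S : Set ℝ} {t ξ s : ℝ}
    (hS : S ⊆ Iic s) (h : s < t) (hψ : IntegrableOn ψ S) :
    Tendsto (fun x => ∫ τ in S, heatGx x t ξ τ * ψ τ) (𝓝 ξ) (𝓝 0) := by
  have hlim := tendsto_integral_filter_of_dominated_convergence (μ := volume.restrict S)
    (F := fun x τ => heatGx x t ξ τ * ψ τ) (f := fun τ => heatGx ξ t ξ τ * ψ τ)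
    (fun τ => 2 / √(2 * π) * (t - s) ^ (-(3 / 2) : ℝ) * ‖ψ τ‖) ?_ ?_
    (hψ.norm.const_mul _) (ae_of_all _ fun τ => ((continuous_heatGx t ξ τ).mul_const _).tendsto ξ)
  · simpa [heatGx_self] using hlim
  · exact Eventually.of_forall fun x => (measurable_heatGx x t ξ).aestronglyMeasurable.mul hψ.1
  · filter_upwards [Metric.closedBall_mem_nhds ξ one_pos] with x hx
    refine ae_restrict_of_ae_restrict_of_subset hS ?_
    filter_upwards [ae_restrict_mem measurableSet_Iic] with τ (hτ : τ ≤ s)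
    have hxξ : |x - ξ| ≤ 1 := by simpa [Real.dist_eq] using hx
    have hdecay : (t - τ) ^ (-(3 / 2) : ℝ) ≤ (t - s) ^ (-(3 / 2) : ℝ) :=
      rpow_le_rpow_of_nonpos (sub_pos.2 h) (by linarith) (by norm_num)
    rw [norm_mul, Real.norm_eq_abs]
    refine mul_le_mul_of_nonneg_right ((abs_heatGx_le (hτ.trans_lt h)).trans ?_) (norm_nonneg _)
    calc 2 / √(2 * π) * |x - ξ| * (t - τ) ^ (-(3 / 2) : ℝ)
        ≤ 2 / √(2 * π) * 1 * (t - s) ^ (-(3 / 2) : ℝ) := by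
          gcongr
          exact rpow_nonneg (by linarith) _
      _ = _ := by ring

theorem tendsto_integral_heatGx_mul_of_tendsto_zero {ψ : ℝ → ℝ} {t ξ : ℝ} (ht : 0 < t)
    (hψ : IntegrableOn ψ (Ioo 0 t)) (hψt : Tendsto ψ (𝓝[<] t) (𝓝 0)) :
    Tendsto (fun x => ∫ τ in Ioo 0 t, heatGx x t ξ τ * ψ τ) (𝓝[≠] ξ) (𝓝 0) := by
  rw [Metric.tendsto_nhds]
  intro ε hε
  obtain ⟨l, hlt, hl⟩ :=
    mem_nhdsLT_iff_exists_Ioo_subset.1 (hψt (Metric.ball_mem_nhds 0 (half_pos hε)))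
  set s := max l (t / 2)
  have hs0 : 0 < s := lt_max_of_lt_right (by linarith)
  have hst : s < t := max_lt hlt (by linarith)
  have hψs (τ : ℝ) (hτ : τ ∈ Ioo s t) : |ψ τ| ≤ ε / 2 := by
    have := mem_ball_zero_iff.1 (hl ⟨(le_max_left _ _).trans_lt hτ.1, hτ.2⟩)
    exact (Real.norm_eq_abs _ ▸ this).le
  have hhead := tendsto_setIntegral_heatGx_mul_of_subset_Iic (ξ := ξ) Ioc_subset_Iic_self hst
    (hψ.mono_set (Ioc_subset_Ioo_right hst))
  filter_upwards [Metric.tendsto_nhds.1 (hhead.mono_left nhdsWithin_le_nhds) (ε / 2) (half_pos hε),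
    self_mem_nhdsWithin] with x hx_head (hx : x ≠ ξ)
  have hint := integrableOn_heatGx_mul (t := t) hx hψ
  rw [dist_zero_right, ← Ioc_union_Ioo_eq_Ioo hs0.le hst, setIntegral_union
    (Ioc_disjoint_Ioi_same.mono_right Ioo_subset_Ioi_self) measurableSet_Ioo
    (hint.mono_set (Ioc_subset_Ioo_right hst)) (hint.mono_set (Ioo_subset_Ioo_left hs0.le))]
  have htail := abs_integral_heatGx_mul_le hx hst hψs
  rw [dist_zero_right] at hx_head
  rw [← Real.norm_eq_abs] at htail
  linarith [norm_add_le (∫ τ in Ioc 0 s, heatGx x t ξ τ * ψ τ)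
    (∫ τ in Ioo s t, heatGx x t ξ τ * ψ τ)]

theorem tendsto_integral_heatGx_mul {φ : ℝ → ℝ} {l : Filter ℝ} {t ξ c : ℝ} (hl : l ≤ 𝓝[≠] ξ)
    (hc : Tendsto (fun x => ∫ τ in Ioo 0 t, heatGx x t ξ τ) l (𝓝 c)) (ht : 0 < t)
    (hφ : IntegrableOn φ (Ioo 0 t)) (hφt : Tendsto φ (𝓝[<] t) (𝓝 (φ t))) :
    Tendsto (fun x => ∫ τ in Ioo 0 t, heatGx x t ξ τ * φ τ) l (𝓝 (c * φ t)) := by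
  have hψ : IntegrableOn (fun τ => φ τ - φ t) (Ioo 0 t) := hφ.sub (integrableOn_const (by simp))
  have hrest := (tendsto_integral_heatGx_mul_of_tendsto_zero (ξ := ξ) ht hψ
    (by simpa using hφt.sub_const (φ t))).mono_left hl
  refine (by simpa using hrest.add (hc.mul_const (φ t)) : Tendsto _ l _).congr' ?_
  filter_upwards [hl self_mem_nhdsWithin] with x (hx : x ≠ ξ)
  have hint : IntegrableOn (fun τ => heatGx x t ξ τ) (Ioo 0 t) := by
    simpa using integrableOn_heatGx_mul (ψ := fun _ => 1) hx (integrableOn_const (by simp))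
  rw [← integral_mul_const, ← integral_add (integrableOn_heatGx_mul hx hψ) (hint.mul_const _)]
  exact setIntegral_congr_fun measurableSet_Ioo fun τ _ => by ring

section CurvedBoundary

variable {X φ : ℝ → ℝ} {t γ m : ℝ}

theorem norm_heatGx_comp_sub_mul_le (hXt : ∀ τ ∈ Ioo 0 t, |X τ - X t| ≤ m * (t - τ) ^ γ)
    (x : ℝ) {τ : ℝ} (hτ : τ ∈ Ioo 0 t) :
    ‖(heatGx x t (X τ) τ - heatGx x t (X t) τ) * φ τ‖ ≤
      2 / √(2 * π) * m * ‖(t - τ) ^ (γ - 3 / 2) * φ τ‖ := by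
  have hτt : 0 < t - τ := sub_pos.2 hτ.2
  have hdiff :
      |heatGx x t (X τ) τ - heatGx x t (X t) τ| ≤ 2 / √(2 * π) * m * (t - τ) ^ (γ - 3 / 2) :=
    calc _ ≤ 2 / √(2 * π) * |X τ - X t| * (t - τ) ^ (-(3 / 2) : ℝ) := abs_heatGx_sub_le hτ.2
      _ ≤ 2 / √(2 * π) * (m * (t - τ) ^ γ) * (t - τ) ^ (-(3 / 2) : ℝ) := by
        gcongr
        exact hXt τ hτ
      _ = _ := by rw [sub_eq_add_neg γ, rpow_add hτt]; ring
  rw [norm_mul, norm_mul, Real.norm_of_nonneg (rpow_nonneg hτt.le _), Real.norm_eq_abs, ← mul_assoc]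
  exact mul_le_mul_of_nonneg_right hdiff (norm_nonneg _)

theorem continuousOn_heatGx_comp_sub_mul (hX : ContinuousOn X (Ioo 0 t))
    (hφ : ContinuousOn φ (Ioo 0 t)) (x : ℝ) :
    ContinuousOn (fun τ => (heatGx x t (X τ) τ - heatGx x t (X t) τ) * φ τ) (Ioo 0 t) :=
  ((continuousOn_heatGx_comp hX fun _ hτ => hτ.2).sub
    (continuousOn_heatGx_comp continuousOn_const fun _ hτ => hτ.2)).mul hφ

theorem integrableOn_heatGx_comp_sub_mul (hX : ContinuousOn X (Ioo 0 t))
    (hφ : ContinuousOn φ (Ioo 0 t)) (hXt : ∀ τ ∈ Ioo 0 t, |X τ - X t| ≤ m * (t - τ) ^ γ)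
    (hφγ : IntegrableOn (fun τ => (t - τ) ^ (γ - 3 / 2) * φ τ) (Ioo 0 t)) (x : ℝ) :
    IntegrableOn (fun τ => (heatGx x t (X τ) τ - heatGx x t (X t) τ) * φ τ) (Ioo 0 t) :=
  Integrable.mono' (hφγ.norm.const_mul _)
    ((continuousOn_heatGx_comp_sub_mul hX hφ x).aestronglyMeasurable measurableSet_Ioo)
    ((ae_restrict_iff' measurableSet_Ioo).2
      (ae_of_all _ fun _ => norm_heatGx_comp_sub_mul_le hXt x))

theorem continuous_integral_heatGx_comp_sub_mul (hX : ContinuousOn X (Ioo 0 t))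
    (hφ : ContinuousOn φ (Ioo 0 t)) (hXt : ∀ τ ∈ Ioo 0 t, |X τ - X t| ≤ m * (t - τ) ^ γ)
    (hφγ : IntegrableOn (fun τ => (t - τ) ^ (γ - 3 / 2) * φ τ) (Ioo 0 t)) :
    Continuous fun x => ∫ τ in Ioo 0 t, (heatGx x t (X τ) τ - heatGx x t (X t) τ) * φ τ :=
  continuous_of_dominated
    (fun x => (continuousOn_heatGx_comp_sub_mul hX hφ x).aestronglyMeasurable measurableSet_Ioo)
    (fun x => (ae_restrict_iff' measurableSet_Ioo).2
      (ae_of_all _ fun _ => norm_heatGx_comp_sub_mul_le hXt x))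
    (hφγ.norm.const_mul _)
    (ae_of_all _ fun τ =>
      ((continuous_heatGx t (X τ) τ).sub (continuous_heatGx t (X t) τ)).mul_const _)

theorem norm_heatGx_comp_mul_le (hXt : ∀ τ ∈ Ioo 0 t, |X τ - X t| ≤ m * (t - τ) ^ γ)
    {x y : ℝ} (hx : x ≠ X t) (hy : y ∈ Metric.ball x (|x - X t| / 2)) {τ : ℝ} (hτ : τ ∈ Ioo 0 t) :
    ‖heatGx y t (X τ) τ * φ τ‖ ≤ 2 / √(2 * π) * m * ‖(t - τ) ^ (γ - 3 / 2) * φ τ‖ +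
      8 / √(2 * π) * √t / (|x - X t| / 2) ^ 3 * ‖φ τ‖ := by
  have hr : 0 < |x - X t| := abs_pos.2 (sub_ne_zero.2 hx)
  have hyX : |x - X t| / 2 ≤ |y - X t| := by
    have := abs_sub_le x y (X t)
    rw [Metric.mem_ball, Real.dist_eq, abs_sub_comm] at hy
    linarith
  have hfar : |heatGx y t (X t) τ| ≤ 8 / √(2 * π) * √t / (|x - X t| / 2) ^ 3 := by
    refine (abs_heatGx_le_of_ne hτ.2 fun h => by simp [h] at hyX; linarith).trans ?_
    gcongr
    linarith [hτ.1]
  calc ‖heatGx y t (X τ) τ * φ τ‖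
      = ‖(heatGx y t (X τ) τ - heatGx y t (X t) τ) * φ τ + heatGx y t (X t) τ * φ τ‖ := by
        congr 1; ring
    _ ≤ _ := (norm_add_le _ _).trans (add_le_add (norm_heatGx_comp_sub_mul_le hXt y hτ)
        (by rw [norm_mul, Real.norm_eq_abs]; exact mul_le_mul_of_nonneg_right hfar (norm_nonneg _)))

theorem hasDerivAt_integral_heatG_mul {x : ℝ} (hx : x ≠ X t) (hX : ContinuousOn X (Ioo 0 t))
    (hφ : ContinuousOn φ (Ioo 0 t)) (hXt : ∀ τ ∈ Ioo 0 t, |X τ - X t| ≤ m * (t - τ) ^ γ)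
    (hφ_int : IntegrableOn φ (Ioo 0 t))
    (hφ_half : IntegrableOn (fun τ => (t - τ) ^ (-(1 / 2) : ℝ) * φ τ) (Ioo 0 t))
    (hφγ : IntegrableOn (fun τ => (t - τ) ^ (γ - 3 / 2) * φ τ) (Ioo 0 t)) :
    HasDerivAt (fun y => ∫ τ in Ioo 0 t, heatG y t (X τ) τ * φ τ)
      (∫ τ in Ioo 0 t, heatGx x t (X τ) τ * φ τ) x := by
  have hr : 0 < |x - X t| := abs_pos.2 (sub_ne_zero.2 hx)
  have hF_meas (y : ℝ) : AEStronglyMeasurable (fun τ => heatG y t (X τ) τ * φ τ)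
      (volume.restrict (Ioo 0 t)) :=
    ((continuousOn_heatG_comp hX fun _ hτ => hτ.2).mul hφ).aestronglyMeasurable measurableSet_Ioo
  have hF_int : IntegrableOn (fun τ => heatG x t (X τ) τ * φ τ) (Ioo 0 t) := by
    refine Integrable.mono' (hφ_half.norm.const_mul (√(2 * π))⁻¹) (hF_meas x) ?_
    filter_upwards [ae_restrict_mem measurableSet_Ioo] with τ hτ
    rw [norm_mul, norm_mul, Real.norm_of_nonneg (rpow_nonneg (sub_pos.2 hτ.2).le _), ← mul_assoc]
    exact mul_le_mul_of_nonneg_right (abs_heatG_le hτ.2) (norm_nonneg _)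
  refine (hasDerivAt_integral_of_dominated_loc_of_deriv_le (Metric.ball_mem_nhds x (half_pos hr))
    (Eventually.of_forall hF_meas) hF_int ?_ ?_ ((hφγ.norm.const_mul (2 / √(2 * π) * m)).add
      (hφ_int.norm.const_mul (8 / √(2 * π) * √t / (|x - X t| / 2) ^ 3)))
    (ae_of_all _ fun τ y _ => (hasDerivAt_heatG y t (X τ) τ).mul_const (φ τ))).2
  · exact ((continuousOn_heatGx_comp hX fun _ hτ => hτ.2).mul hφ).aestronglyMeasurable
      measurableSet_Ioo
  · filter_upwards [ae_restrict_mem measurableSet_Ioo] with τ hτ y hy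
    exact norm_heatGx_comp_mul_le hXt hx hy hτ

theorem tendsto_deriv_integral_heatG_mul {l : Filter ℝ} {c : ℝ} (hl : l ≤ 𝓝[≠] (X t))
    (hc : Tendsto (fun x => ∫ τ in Ioo 0 t, heatGx x t (X t) τ) l (𝓝 c)) (ht : 0 < t)
    (hX : ContinuousOn X (Ioo 0 t)) (hφ : ContinuousOn φ (Ioo 0 t))
    (hXt : ∀ τ ∈ Ioo 0 t, |X τ - X t| ≤ m * (t - τ) ^ γ) (hφ_int : IntegrableOn φ (Ioo 0 t))
    (hφ_half : IntegrableOn (fun τ => (t - τ) ^ (-(1 / 2) : ℝ) * φ τ) (Ioo 0 t))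
    (hφγ : IntegrableOn (fun τ => (t - τ) ^ (γ - 3 / 2) * φ τ) (Ioo 0 t))
    (hφt : Tendsto φ (𝓝[<] t) (𝓝 (φ t))) :
    Tendsto (fun x => deriv (fun y => ∫ τ in Ioo 0 t, heatG y t (X τ) τ * φ τ) x) l
      (𝓝 (c * φ t + ∫ τ in Ioo 0 t, heatGx (X t) t (X τ) τ * φ τ)) := by
  have hcurv := ((continuous_integral_heatGx_comp_sub_mul hX hφ hXt hφγ).tendsto (X t)).mono_left
    (hl.trans nhdsWithin_le_nhds)
  simp only [heatGx_self, sub_zero] at hcurv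
  refine ((tendsto_integral_heatGx_mul hl hc ht hφ_int hφt).add hcurv).congr' ?_
  filter_upwards [hl self_mem_nhdsWithin] with x (hx : x ≠ X t)
  rw [(hasDerivAt_integral_heatG_mul hx hX hφ hXt hφ_int hφ_half hφγ).deriv, ← integral_add
    (integrableOn_heatGx_mul hx hφ_int) (integrableOn_heatGx_comp_sub_mul hX hφ hXt hφγ x)]
  exact setIntegral_congr_fun measurableSet_Ioo fun τ _ => by ring

end CurvedBoundary

theorem jump_relation_general (X : ℝ → ℝ) (γ T m : ℝ) (hγ : 1 / 2 < γ)
    (hHolder : ∀ s ∈ Set.Icc (0:ℝ) T, ∀ u ∈ Set.Icc (0:ℝ) T,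
      |X u - X s| ≤ m * |u - s| ^ γ)
    (φ : ℝ → ℝ) (ν : ℝ) (hν : 0 < ν)
    (hφcont : ContinuousOn φ (Set.Ioc 0 T))
    (hφbdd : ∃ C : ℝ, ∀ t ∈ Set.Ioc (0:ℝ) T, t ^ (1 - ν) * |φ t| ≤ C)
    (t : ℝ) (ht : 0 < t) (htT : t ≤ T) :
    Filter.Tendsto
        (fun x => deriv (fun y => ∫ τ in Set.Ioo 0 t, heatG y t (X τ) τ * φ τ) x)
        (nhdsWithin (X t) (Set.Iio (X t)))
        (nhds (φ t + ∫ τ in Set.Ioo 0 t, heatGx (X t) t (X τ) τ * φ τ)) ∧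
      Filter.Tendsto
        (fun x => deriv (fun y => ∫ τ in Set.Ioo 0 t, heatG y t (X τ) τ * φ τ) x)
        (nhdsWithin (X t) (Set.Ioi (X t)))
        (nhds (-φ t + ∫ τ in Set.Ioo 0 t, heatGx (X t) t (X τ) τ * φ τ)) := by
  obtain ⟨C, hC⟩ := hφbdd
  have hsub : Ioo 0 t ⊆ Ioc 0 T := fun τ hτ => ⟨hτ.1, hτ.2.le.trans htT⟩
  have hφ : ContinuousOn φ (Ioo 0 t) := hφcont.mono hsub
  have hφC : ∀ τ ∈ Ioo 0 t, |φ τ| ≤ C * τ ^ (ν - 1) := fun τ hτ => by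
    rw [show ν - 1 = -(1 - ν) by ring, rpow_neg hτ.1.le, ← div_eq_mul_inv,
      le_div_iff₀ (rpow_pos_of_pos hτ.1 _), mul_comm]
    exact hC τ (hsub hτ)
  have hφw (b : ℝ) (hb : -1 < b) : IntegrableOn (fun τ => (t - τ) ^ b * φ τ) (Ioo 0 t) :=
    integrableOn_rpow_sub_mul (by linarith) hb ht hφ hφC
  have hX : ContinuousOn X (Ioo 0 t) :=
    (continuousOn_of_abs_sub_le_mul_rpow (by linarith) hHolder).mono
      fun τ hτ => ⟨hτ.1.le, hτ.2.le.trans htT⟩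
  have hXt : ∀ τ ∈ Ioo 0 t, |X τ - X t| ≤ m * (t - τ) ^ γ := fun τ hτ => by
    simpa [abs_of_neg (sub_neg.2 hτ.2)] using
      hHolder t ⟨ht.le, htT⟩ τ ⟨hτ.1.le, hτ.2.le.trans htT⟩
  have hφt : Tendsto φ (𝓝[<] t) (𝓝 (φ t)) := by
    rw [← nhdsWithin_Ioo_eq_nhdsLT ht]
    exact (hφcont t ⟨ht, htT⟩).mono hsub
  have hjump {l : Filter ℝ} {c : ℝ} (hl : l ≤ 𝓝[≠] (X t))
      (hc : Tendsto (fun x => ∫ τ in Ioo 0 t, heatGx x t (X t) τ) l (𝓝 c)) :=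
    tendsto_deriv_integral_heatG_mul hl hc ht hX hφ hXt (by simpa using hφw 0 (by norm_num))
      (hφw _ (by norm_num)) (hφw _ (by linarith)) hφt
  exact ⟨by simpa using hjump (nhdsLT_le_nhdsNE _) (tendsto_integral_heatGx_nhdsLT ht),
    by simpa using hjump (nhdsGT_le_nhdsNE _) (tendsto_integral_heatGx_nhdsGT ht)⟩

/-- Jump relation for the single-layer heat potential
w(x,t) = ∫₀ᵗ G(x,t;X_τ,τ)φ(τ)dτ, for X Hölder with exponent γ > 1/2 on [0,T]
and φ in the weighted class C⁰_{(ν)}((0,T]):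
lim_{x→X_t^±} ∂_x w(x,t) = ∓φ(t) + ∫₀ᵗ ∂_x G(X_t,t;X_τ,τ)φ(τ)dτ. -/
theorem jump_relation (X : ℝ → ℝ) (γ T m : ℝ) (hγ : 1 / 2 < γ) (hγ1 : γ ≤ 1)
    (hT : 0 < T)
    (hHolder : ∀ s ∈ Set.Icc (0:ℝ) T, ∀ u ∈ Set.Icc (0:ℝ) T,
      |X u - X s| ≤ m * |u - s| ^ γ)
    (φ : ℝ → ℝ) (ν : ℝ) (hν : 0 < ν) (hν1 : ν ≤ 1)
    (hφcont : ContinuousOn φ (Set.Ioc 0 T))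
    (hφbdd : ∃ C : ℝ, ∀ t ∈ Set.Ioc (0:ℝ) T, t ^ (1 - ν) * |φ t| ≤ C)
    (t : ℝ) (ht : 0 < t) (htT : t ≤ T) :
    Filter.Tendsto
        (fun x => deriv (fun y => ∫ τ in Set.Ioo 0 t, heatG y t (X τ) τ * φ τ) x)
        (nhdsWithin (X t) (Set.Iio (X t)))
        (nhds (φ t + ∫ τ in Set.Ioo 0 t, heatGx (X t) t (X τ) τ * φ τ)) ∧
      Filter.Tendsto
        (fun x => deriv (fun y => ∫ τ in Set.Ioo 0 t, heatG y t (X τ) τ * φ τ) x)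
        (nhdsWithin (X t) (Set.Ioi (X t)))
        (nhds (-φ t + ∫ τ in Set.Ioo 0 t, heatGx (X t) t (X τ) τ * φ τ)) :=
  jump_relation_general X γ T m hγ hHolder φ ν hν hφcont hφbdd t ht htT
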